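/- arXiv:1905.11899 — 6 statements merged into one kernel-verified Lean document; each statement's English description precedes it below -/
import Mathlib

section
/- Let N ≥ 1 and let −1 = ξ₀ < ξ₁ < ⋯ < ξ_N = 1 and ρ₀, …, ρ_N be a Gauss–Lobatto family on [−1,1], i.e. for every real polynomial φ of degree at most 2N−1, ∫_{−1}^{1} φ(ζ) dζ = Σ_{i=0}^{N} φ(ξ_i) ρ_i. Then for every real polynomial φ_N of degree at most N, ∫_{−1}^{1} φ_N(ζ)² dζ ≤ Σ_{i=0}^{N} φ_N(ξ_i)² ρ_i ≤ 3 ∫_{−1}^{1} φ_N(ζ)² dζ. -/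
/-!
Write `φ = c • L_N + r` with `L_N` the Legendre polynomial and `deg r < N`. The quadrature is exact
in degree `2N - 1` and `L_N ⊥ r`, so both `∫ φ²` and `∑ ρᵢ φ(ξᵢ)²` equal `c²` times the
corresponding quantity for `L_N`, plus `∫ r²`. Here `∫ L_N² = 2 / (2N + 1)`. For the discrete value,
the node polynomial `∏ (X - ξᵢ)` vanishes at `±1` and, by exactness, is orthogonal to every
polynomial of degree `< N - 1`; these conditions determine it up to a scalar as `X L_N - L_{N-1}`.
Hence `ξᵢ L_N(ξᵢ) = L_{N-1}(ξᵢ)` at every node, which gives `∑ ρᵢ L_N(ξᵢ)² = 2 / N`. Finally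
`2 / (2N + 1) ≤ 2 / N ≤ 3 · 2 / (2N + 1)`.
-/

open Polynomial Set

section Factorial

open Nat

theorem Nat.centralBinom_mul_factorial_mul_factorial (n : ℕ) :
    n.centralBinom * n ! * n ! = (2 * n)! := by
  rw [centralBinom_eq_two_mul_choose, ← choose_mul_factorial_mul_factorial (by omega : n ≤ 2 * n),
    show 2 * n - n = n by omega]

theorem Polynomial.eval_iterate_derivative_X_sub_C_pow_mul {R : Type*} [CommRing R] (a : R)
    (n : ℕ) (q : R[X]) : (derivative^[n] ((X - C a) ^ n * q)).eval a = n ! * q.eval a := by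
  rw [iterate_derivative_mul, eval_finsetSum, Finset.sum_eq_single 0]
  · simp [iterate_derivative_X_sub_pow_self]
  · intro k hk hk0
    have hkn : k ≤ n := Nat.lt_succ_iff.mp (Finset.mem_range.mp hk)
    simp [iterate_derivative_X_sub_pow, Nat.sub_sub_self hkn, hk0]
  · simp

theorem Polynomial.iterate_derivative_natDegree {R : Type*} [CommRing R] (p : R[X]) :
    derivative^[p.natDegree] p = C (p.natDegree ! * p.leadingCoeff) := by
  rw [eq_C_of_natDegree_le_zero ((natDegree_iterate_derivative p _).trans (by omega)),
    coeff_iterate_derivative, zero_add, descFactorial_self, nsmul_eq_mul, leadingCoeff]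

end Factorial

theorem Polynomial.natDegree_sub_C_mul_le {K : Type*} [Field K] {p q : K[X]} {n : ℕ}
    (hp : p.natDegree ≤ n + 1) (hq : q.natDegree ≤ n + 1) (hq0 : q.coeff (n + 1) ≠ 0) :
    (p - C (p.coeff (n + 1) / q.coeff (n + 1)) * q).natDegree ≤ n :=
  natDegree_le_pred (n := n + 1)
    ((natDegree_sub_le _ _).trans (max_le hp ((natDegree_C_mul_le _ _).trans hq)))
    (by rw [coeff_sub, coeff_C_mul, div_mul_cancel₀ _ hq0, sub_self])

section XSqSubOne

variable {R : Type*} [CommRing R]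

theorem X_sq_sub_one_eq : (X ^ 2 - 1 : R[X]) = (X - C 1) * (X - C (-1)) := by
  simp only [map_one, map_neg]; ring

theorem monic_X_sq_sub_one [Nontrivial R] : (X ^ 2 - 1 : R[X]).Monic := by
  simpa using monic_X_pow_sub_C (1 : R) two_ne_zero

theorem natDegree_X_sq_sub_one [Nontrivial R] : (X ^ 2 - 1 : R[X]).natDegree = 2 := by
  simpa using natDegree_X_pow_sub_C (n := 2) (r := (1 : R))

theorem natDegree_X_sq_sub_one_pow [Nontrivial R] (n : ℕ) :
    ((X ^ 2 - 1 : R[X]) ^ n).natDegree = 2 * n := by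
  rw [monic_X_sq_sub_one.natDegree_pow, natDegree_X_sq_sub_one, mul_comm]

end XSqSubOne

theorem X_sq_sub_one_dvd {p : ℝ[X]} (h1 : p.eval 1 = 0) (hm1 : p.eval (-1) = 0) :
    X ^ 2 - 1 ∣ p := by
  rw [X_sq_sub_one_eq]
  exact (isCoprime_X_sub_C_of_isUnit_sub (by norm_num)).mul_dvd (dvd_iff_isRoot.mpr h1)
    (dvd_iff_isRoot.mpr hm1)

noncomputable def polyIntegral : ℝ[X] →ₗ[ℝ] ℝ where
  toFun p := ∫ x in (-1 : ℝ)..1, p.eval x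
  map_add' p q := by
    simp only [eval_add]
    exact intervalIntegral.integral_add (p.continuous.intervalIntegrable _ _)
      (q.continuous.intervalIntegrable _ _)
  map_smul' c p := by simp

theorem polyIntegral_apply (p : ℝ[X]) : polyIntegral p = ∫ x in (-1 : ℝ)..1, p.eval x := rfl

theorem polyIntegral_derivative (p : ℝ[X]) :
    polyIntegral (derivative p) = p.eval 1 - p.eval (-1) :=
  intervalIntegral.integral_eq_sub_of_hasDerivAt (fun x _ => p.hasDerivAt x)
    (p.derivative.continuous.intervalIntegrable _ _)

theorem polyIntegral_derivative_mul_of_dvd {p : ℝ[X]} (hp : X ^ 2 - 1 ∣ p) (q : ℝ[X]) :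
    polyIntegral (derivative p * q) = -polyIntegral (p * derivative q) := by
  have h1 : p.eval 1 = 0 := eval_eq_zero_of_dvd_of_eval_eq_zero hp (by norm_num)
  have hm1 : p.eval (-1) = 0 := eval_eq_zero_of_dvd_of_eval_eq_zero hp (by norm_num)
  have h := polyIntegral_derivative (p * q)
  rw [derivative_mul, map_add, eval_mul, eval_mul, h1, hm1] at h
  linarith

theorem polyIntegral_iterate_derivative_mul_of_dvd {n : ℕ} {p : ℝ[X]} (hp : (X ^ 2 - 1) ^ n ∣ p)
    (q : ℝ[X]) :
    polyIntegral (derivative^[n] p * q) = (-1) ^ n * polyIntegral (p * derivative^[n] q) := by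
  induction n generalizing q with
  | zero => simp
  | succ n ih =>
    have hdvd : X ^ 2 - 1 ∣ derivative^[n] p := by
      simpa using pow_sub_dvd_iterate_derivative_of_pow_dvd n hp
    rw [Function.iterate_succ_apply', polyIntegral_derivative_mul_of_dvd hdvd,
      ih (dvd_trans (pow_dvd_pow _ n.le_succ) hp), ← Function.iterate_succ_apply, pow_succ]
    ring

theorem polyIntegral_nonneg {p : ℝ[X]} (hp : ∀ x ∈ Icc (-1 : ℝ) 1, 0 ≤ p.eval x) :
    0 ≤ polyIntegral p :=
  intervalIntegral.integral_nonneg (by norm_num) hp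

theorem polyIntegral_pos {p : ℝ[X]} (hp0 : p ≠ 0) (hp : ∀ x ∈ Icc (-1 : ℝ) 1, 0 ≤ p.eval x) :
    0 < polyIntegral p := by
  obtain ⟨c, hc, hpc⟩ : ∃ c ∈ Ioo (-1 : ℝ) 1, p.eval c ≠ 0 := by
    by_contra! h
    exact hp0 (p.eq_zero_of_infinite_isRoot ((Ioo_infinite (by norm_num)).mono h))
  exact intervalIntegral.integral_pos (by norm_num) p.continuous.continuousOn
    (fun x hx => hp x (Ioc_subset_Icc_self hx))
    ⟨c, Ioo_subset_Icc_self hc, (hp c (Ioo_subset_Icc_self hc)).lt_of_ne' hpc⟩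

theorem polyIntegral_one_sub_X_sq_pow_succ (n : ℕ) :
    (2 * n + 3) * polyIntegral ((1 - X ^ 2) ^ (n + 1)) =
      (2 * n + 2) * polyIntegral ((1 - X ^ 2) ^ n) := by
  have hderiv : derivative (X * (1 - X ^ 2 : ℝ[X]) ^ (n + 1)) =
      (2 * n + 3 : ℝ) • (1 - X ^ 2) ^ (n + 1) - (2 * n + 2 : ℝ) • (1 - X ^ 2) ^ n := by
    simp only [derivative_mul, derivative_X, derivative_pow, derivative_sub, derivative_one,
      Polynomial.smul_eq_C_mul, map_add, map_mul, map_natCast, map_ofNat]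
    push_cast
    ring
  have h := polyIntegral_derivative (X * (1 - X ^ 2) ^ (n + 1))
  rw [hderiv, map_sub, map_smul, map_smul] at h
  norm_num at h
  linarith

theorem polyIntegral_one_sub_X_sq_pow (n : ℕ) :
    polyIntegral ((1 - X ^ 2) ^ n) = 2 * 4 ^ n / ((2 * n + 1) * n.centralBinom) := by
  induction n with
  | zero => norm_num [polyIntegral_apply]
  | succ n ih =>
    have hcb : ((n + 1 : ℕ) : ℝ) * (n + 1).centralBinom = 2 * (2 * n + 1) * n.centralBinom := by
      exact_mod_cast n.succ_mul_centralBinom_succ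
    have hrec := polyIntegral_one_sub_X_sq_pow_succ n
    have := n.centralBinom_pos
    rw [ih] at hrec
    push_cast at hcb ⊢
    field_simp at hrec
    rw [eq_div_iff (by have := (n + 1).centralBinom_pos; positivity)]
    refine mul_left_cancel₀ (by positivity : (n + 1 : ℝ) ≠ 0) ?_
    linear_combination (polyIntegral ((1 - X ^ 2) ^ (n + 1)) * (2 * n + 3)) * hcb + 2 * hrec

section Legendre

open Nat

noncomputable def legendre (n : ℕ) : ℝ[X] :=
  C (2 ^ n * n ! : ℝ)⁻¹ * derivative^[n] ((X ^ 2 - 1) ^ n)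

theorem natDegree_legendre_le (n : ℕ) : (legendre n).natDegree ≤ n := by
  refine (natDegree_C_mul_le _ _).trans ((natDegree_iterate_derivative _ n).trans ?_)
  rw [natDegree_X_sq_sub_one_pow]; omega

theorem coeff_legendre_self (n : ℕ) : (legendre n).coeff n = n.centralBinom / 2 ^ n := by
  have hlead := ((monic_X_sq_sub_one (R := ℝ)).pow n).coeff_natDegree
  rw [natDegree_X_sq_sub_one_pow, two_mul] at hlead
  rw [legendre, coeff_C_mul, coeff_iterate_derivative, hlead, nsmul_one,
    descFactorial_eq_factorial_mul_choose, ← two_mul, ← centralBinom_eq_two_mul_choose]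
  push_cast
  field_simp

theorem coeff_legendre_self_pos (n : ℕ) : 0 < (legendre n).coeff n := by
  rw [coeff_legendre_self]; have := n.centralBinom_pos; positivity

theorem coeff_legendre_succ (n : ℕ) :
    (legendre (n + 1)).coeff (n + 1) = (2 * n + 1) / (n + 1) * (legendre n).coeff n := by
  have hcb : ((n + 1 : ℕ) : ℝ) * (n + 1).centralBinom = 2 * (2 * n + 1) * n.centralBinom := by
    exact_mod_cast n.succ_mul_centralBinom_succ
  rw [coeff_legendre_self, coeff_legendre_self, pow_succ]
  push_cast at hcb
  field_simp
  linear_combination hcb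

theorem eval_legendre_one (n : ℕ) : (legendre n).eval 1 = 1 := by
  rw [legendre, eval_mul, eval_C, X_sq_sub_one_eq, mul_pow,
    eval_iterate_derivative_X_sub_C_pow_mul]
  simp only [map_neg, map_one, sub_neg_eq_add, eval_pow, eval_add, eval_X, eval_one]
  norm_num
  field_simp

theorem eval_legendre_neg_one (n : ℕ) : (legendre n).eval (-1) = (-1) ^ n := by
  rw [legendre, eval_mul, eval_C, X_sq_sub_one_eq, mul_pow, mul_comm ((X - C 1) ^ n),
    eval_iterate_derivative_X_sub_C_pow_mul]
  simp only [map_one, eval_pow, eval_sub, eval_X, eval_one]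
  rw [show (-1 - 1 : ℝ) = -1 * 2 by norm_num, mul_pow]
  field_simp

theorem polyIntegral_legendre_mul_eq_zero {n : ℕ} {q : ℝ[X]} (hq : q.natDegree < n) :
    polyIntegral (legendre n * q) = 0 := by
  rw [legendre, mul_assoc, C_mul', map_smul, polyIntegral_iterate_derivative_mul_of_dvd dvd_rfl,
    iterate_derivative_eq_zero hq]
  simp

theorem polyIntegral_legendre_sq (n : ℕ) : polyIntegral (legendre n ^ 2) = 2 / (2 * n + 1) := by
  set W : ℝ[X] := (X ^ 2 - 1) ^ n
  have hD : derivative^[n] (derivative^[n] W) = C ((2 * n)! : ℝ) := by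
    rw [← Function.iterate_add_apply, ← two_mul, ← natDegree_X_sq_sub_one_pow (R := ℝ),
      iterate_derivative_natDegree, (monic_X_sq_sub_one.pow n).leadingCoeff, mul_one]
  have hsign : (1 - X ^ 2 : ℝ[X]) ^ n = ((-1) ^ n : ℝ) • W := by
    rw [← neg_sub, neg_pow, Polynomial.smul_eq_C_mul]
    simp [W]
  have hWW : polyIntegral (derivative^[n] W * derivative^[n] W) =
      (2 * n)! * polyIntegral ((1 - X ^ 2) ^ n) := by
    rw [polyIntegral_iterate_derivative_mul_of_dvd dvd_rfl, hD, mul_comm W, C_mul', map_smul, hsign,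
      map_smul, smul_eq_mul, smul_eq_mul]
    ring
  have hcb := n.centralBinom_pos
  have hfac := n.factorial_pos
  have h4 : (4 : ℝ) ^ n = 2 ^ n * 2 ^ n := by rw [← mul_pow]; norm_num
  rw [legendre, mul_pow, ← map_pow, C_mul', map_smul, sq (derivative^[n] W), hWW,
    polyIntegral_one_sub_X_sq_pow, ← centralBinom_mul_factorial_mul_factorial, h4, smul_eq_mul]
  push_cast
  field_simp

end Legendre

theorem eq_zero_of_polyIntegral_mul_eq_zero {M : ℕ} {d : ℝ[X]} (hd : d.natDegree ≤ M + 1)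
    (h1 : d.eval 1 = 0) (hm1 : d.eval (-1) = 0)
    (horth : ∀ q : ℝ[X], q.natDegree < M → polyIntegral (d * q) = 0) : d = 0 := by
  obtain ⟨e, rfl⟩ := X_sq_sub_one_dvd h1 hm1
  by_contra hd0
  have he : e ≠ 0 := right_ne_zero_of_mul hd0
  have hdeg : e.natDegree < M := by
    rw [natDegree_mul (monic_X_sq_sub_one (R := ℝ)).ne_zero he, natDegree_X_sq_sub_one] at hd
    omega
  have hpos : 0 < polyIntegral ((1 - X ^ 2) * e ^ 2) := by
    refine polyIntegral_pos (mul_ne_zero ?_ (pow_ne_zero 2 he)) fun x hx => ?_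
    · rw [← neg_sub]; exact neg_ne_zero.mpr (monic_X_sq_sub_one (R := ℝ)).ne_zero
    · simp only [eval_mul, eval_sub, eval_one, eval_pow, eval_X]
      exact mul_nonneg (by nlinarith [hx.1, hx.2]) (sq_nonneg _)
  have h := horth e hdeg
  rw [show (X ^ 2 - 1) * e * e = -((1 - X ^ 2) * e ^ 2) by ring, map_neg] at h
  linarith

/-- Up to the factor `M + 1`, this is `(X² - 1) L'_{M+1}`, whose roots are the Gauss–Lobatto
nodes. -/
noncomputable def lobatto (M : ℕ) : ℝ[X] := X * legendre (M + 1) - legendre M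

theorem natDegree_lobatto_le (M : ℕ) : (lobatto M).natDegree ≤ M + 2 := by
  refine (natDegree_sub_le _ _).trans (max_le ?_ ((natDegree_legendre_le M).trans (by omega)))
  refine natDegree_mul_le.trans ?_
  have := natDegree_legendre_le (M + 1)
  rw [natDegree_X]
  omega

theorem eval_lobatto_one (M : ℕ) : (lobatto M).eval 1 = 0 := by
  simp [lobatto, eval_legendre_one]

theorem eval_lobatto_neg_one (M : ℕ) : (lobatto M).eval (-1) = 0 := by
  simp [lobatto, eval_legendre_neg_one, pow_succ]

theorem polyIntegral_lobatto_mul_eq_zero {M : ℕ} {q : ℝ[X]} (hq : q.natDegree < M) :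
    polyIntegral (lobatto M * q) = 0 := by
  have hXq : (X * q).natDegree < M + 1 := natDegree_mul_le.trans_lt (by rw [natDegree_X]; omega)
  rw [lobatto, sub_mul, mul_assoc, mul_left_comm, map_sub, polyIntegral_legendre_mul_eq_zero hXq,
    polyIntegral_legendre_mul_eq_zero hq, sub_zero]

noncomputable def quadrature {ι : Type*} [Fintype ι] (ξ ρ : ι → ℝ) : ℝ[X] →ₗ[ℝ] ℝ :=
  ∑ i, ρ i • leval (ξ i)

theorem quadrature_apply {ι : Type*} [Fintype ι] (ξ ρ : ι → ℝ) (p : ℝ[X]) :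
    quadrature ξ ρ p = ∑ i, p.eval (ξ i) * ρ i := by
  simp [quadrature, mul_comm]

def IsExactOfDegree (Λ : ℝ[X] →ₗ[ℝ] ℝ) (n : ℕ) : Prop :=
  ∀ p : ℝ[X], p.natDegree ≤ n → Λ p = polyIntegral p

theorem isExactOfDegree_polyIntegral (n : ℕ) : IsExactOfDegree polyIntegral n :=
  fun _ _ => rfl

section GaussLobatto

variable {ι : Type*} [Fintype ι] {M : ℕ} {ξ ρ : ι → ℝ}

theorem polyIntegral_nodal_mul_eq_zero (hcard : Fintype.card ι = M + 2)
    (hexact : IsExactOfDegree (quadrature ξ ρ) (2 * M + 1)) {q : ℝ[X]} (hq : q.natDegree < M) :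
    polyIntegral (Lagrange.nodal Finset.univ ξ * q) = 0 := by
  have hdeg : (Lagrange.nodal Finset.univ ξ * q).natDegree ≤ 2 * M + 1 := by
    refine natDegree_mul_le.trans ?_
    rw [Lagrange.natDegree_nodal, Finset.card_univ, hcard]
    omega
  rw [← hexact _ hdeg, quadrature_apply]
  exact Finset.sum_eq_zero fun i _ => by
    rw [eval_mul, Lagrange.eval_nodal_at_node (Finset.mem_univ i), zero_mul, zero_mul]

theorem eval_lobatto_eq_zero (hcard : Fintype.card ι = M + 2) (h1 : 1 ∈ range ξ)
    (hm1 : -1 ∈ range ξ) (hexact : IsExactOfDegree (quadrature ξ ρ) (2 * M + 1)) (i : ι) :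
    (lobatto M).eval (ξ i) = 0 := by
  set ω := Lagrange.nodal Finset.univ ξ
  have hω_deg : ω.natDegree = M + 2 := by
    rw [Lagrange.natDegree_nodal, Finset.card_univ, hcard]
  have hω_lead : ω.coeff (M + 2) ≠ 0 := by
    rw [← hω_deg, Lagrange.nodal_monic.coeff_natDegree]; exact one_ne_zero
  have hω_node : ∀ j, ω.eval (ξ j) = 0 := fun j => Lagrange.eval_nodal_at_node (Finset.mem_univ j)
  obtain ⟨j₁, hj₁⟩ := h1
  obtain ⟨j₂, hj₂⟩ := hm1
  set c := (lobatto M).coeff (M + 2) / ω.coeff (M + 2)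
  have hd0 : lobatto M - C c * ω = 0 := by
    refine eq_zero_of_polyIntegral_mul_eq_zero
      (natDegree_sub_C_mul_le (natDegree_lobatto_le M) hω_deg.le hω_lead) ?_ ?_ fun q hq => ?_
    · rw [eval_sub, eval_mul, ← hj₁, hω_node, hj₁, eval_lobatto_one, mul_zero, sub_zero]
    · rw [eval_sub, eval_mul, ← hj₂, hω_node, hj₂, eval_lobatto_neg_one, mul_zero, sub_zero]
    · rw [sub_mul, mul_assoc, C_mul', map_sub, map_smul, polyIntegral_lobatto_mul_eq_zero hq,
        polyIntegral_nodal_mul_eq_zero hcard hexact hq, smul_zero, sub_zero]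
  simpa [hω_node] using congrArg (eval (ξ i)) hd0

theorem quadrature_legendre_sq (hcard : Fintype.card ι = M + 2) (h1 : 1 ∈ range ξ)
    (hm1 : -1 ∈ range ξ) (hexact : IsExactOfDegree (quadrature ξ ρ) (2 * M + 1)) :
    quadrature ξ ρ (legendre (M + 1) ^ 2) = 2 / (M + 1) := by
  have hL : (X * legendre M).coeff (M + 1) ≠ 0 := by
    rw [coeff_X_mul]; exact (coeff_legendre_self_pos M).ne'
  have ha : (legendre (M + 1)).coeff (M + 1) / (X * legendre M).coeff (M + 1) =
      (2 * M + 1) / (M + 1) := by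
    rw [coeff_X_mul, coeff_legendre_succ, mul_div_assoc, div_self (coeff_legendre_self_pos M).ne',
      mul_one]
  set a := (legendre (M + 1)).coeff (M + 1) / (X * legendre M).coeff (M + 1)
  set r := legendre (M + 1) - C a * (X * legendre M)
  have hr : r.natDegree ≤ M := natDegree_sub_C_mul_le (natDegree_legendre_le _)
    (natDegree_mul_le.trans (by rw [natDegree_X]; have := natDegree_legendre_le M; omega)) hL
  have hsplit : legendre (M + 1) ^ 2 = a • (X * legendre (M + 1) * legendre M) +
      legendre (M + 1) * r := by
    rw [← C_mul']; ring
  -- at the nodes `X L_{M+1} = L_M`, which brings the degree down to where the rule is exact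
  have hnode : quadrature ξ ρ (X * legendre (M + 1) * legendre M) =
      quadrature ξ ρ (legendre M ^ 2) := by
    simp only [quadrature_apply]
    refine Finset.sum_congr rfl fun i _ => ?_
    have hi := eval_lobatto_eq_zero hcard h1 hm1 hexact i
    rw [lobatto, eval_sub, eval_mul, eval_X, sub_eq_zero] at hi
    rw [eval_mul, eval_mul, eval_X, hi, eval_pow, sq]
  have hsq : quadrature ξ ρ (legendre M ^ 2) = polyIntegral (legendre M ^ 2) :=
    hexact _ (natDegree_pow_le.trans (by have := natDegree_legendre_le M; nlinarith))
  have hLr : quadrature ξ ρ (legendre (M + 1) * r) = 0 := by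
    rw [hexact _ (natDegree_mul_le.trans (by have := natDegree_legendre_le (M + 1); omega)),
      polyIntegral_legendre_mul_eq_zero (by omega)]
  rw [hsplit, map_add, map_smul, hnode, hsq, hLr, polyIntegral_legendre_sq, ha, smul_eq_mul,
    add_zero]
  field_simp

end GaussLobatto

theorem exists_eq_C_mul_legendre_add {M : ℕ} {p : ℝ[X]} (hp : p.natDegree ≤ M + 1) :
    ∃ c r, r.natDegree ≤ M ∧ p = C c * legendre (M + 1) + r :=
  ⟨_, _, natDegree_sub_C_mul_le hp (natDegree_legendre_le _) (coeff_legendre_self_pos _).ne',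
    (add_sub_cancel _ _).symm⟩

theorem map_sq_C_mul_legendre_add {M : ℕ} {Λ : ℝ[X] →ₗ[ℝ] ℝ}
    (hΛ : IsExactOfDegree Λ (2 * M + 1)) (c : ℝ) {r : ℝ[X]} (hr : r.natDegree ≤ M) :
    Λ ((C c * legendre (M + 1) + r) ^ 2) =
      c ^ 2 * Λ (legendre (M + 1) ^ 2) + polyIntegral (r ^ 2) := by
  have hL := natDegree_legendre_le (M + 1)
  have hcross : Λ ((2 * c) • (legendre (M + 1) * r) + r ^ 2) = polyIntegral (r ^ 2) := by
    rw [hΛ _ ?_, map_add, map_smul, polyIntegral_legendre_mul_eq_zero (by omega), smul_zero,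
      zero_add]
    refine (natDegree_add_le _ _).trans (max_le ?_ ?_)
    · exact (natDegree_smul_le _ _).trans (natDegree_mul_le.trans (by omega))
    · exact natDegree_pow_le.trans (by nlinarith)
  calc Λ ((C c * legendre (M + 1) + r) ^ 2)
      = Λ (c ^ 2 • legendre (M + 1) ^ 2 + ((2 * c) • (legendre (M + 1) * r) + r ^ 2)) := by
        simp only [Polynomial.smul_eq_C_mul, map_mul, map_pow, map_ofNat]
        ring_nf
    _ = c ^ 2 * Λ (legendre (M + 1) ^ 2) + polyIntegral (r ^ 2) := by
        rw [map_add, map_smul, hcross, smul_eq_mul]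

theorem stmt_7_general (N : ℕ) (hN : 1 ≤ N)
    (ξ ρ : Fin (N + 1) → ℝ)
    (hfirst : ξ 0 = -1) (hlast : ξ (Fin.last N) = 1)
    (hquad : ∀ φ : Polynomial ℝ, φ.natDegree ≤ 2 * N - 1 →
      ∫ ζ in (-1 : ℝ)..1, φ.eval ζ = ∑ i : Fin (N + 1), φ.eval (ξ i) * ρ i) :
    ∀ φN : Polynomial ℝ, φN.natDegree ≤ N →
      (∫ ζ in (-1 : ℝ)..1, φN.eval ζ ^ 2) ≤
        (∑ i : Fin (N + 1), φN.eval (ξ i) ^ 2 * ρ i) ∧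
      (∑ i : Fin (N + 1), φN.eval (ξ i) ^ 2 * ρ i) ≤
        3 * ∫ ζ in (-1 : ℝ)..1, φN.eval ζ ^ 2 := by
  obtain ⟨M, rfl⟩ : ∃ M, N = M + 1 := ⟨N - 1, by omega⟩
  have hexact : IsExactOfDegree (quadrature ξ ρ) (2 * M + 1) := fun p hp => by
    rw [quadrature_apply, polyIntegral_apply, hquad p (by omega)]
  have hQL := quadrature_legendre_sq (by simp) ⟨_, hlast⟩ ⟨_, hfirst⟩ hexact
  intro φ hφ
  obtain ⟨c, r, hr, rfl⟩ := exists_eq_C_mul_legendre_add hφ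
  have hI : ∫ ζ in (-1 : ℝ)..1, (C c * legendre (M + 1) + r).eval ζ ^ 2 =
      polyIntegral ((C c * legendre (M + 1) + r) ^ 2) := by simp [polyIntegral_apply]
  have hQ : ∑ i, (C c * legendre (M + 1) + r).eval (ξ i) ^ 2 * ρ i =
      quadrature ξ ρ ((C c * legendre (M + 1) + r) ^ 2) := by simp [quadrature_apply]
  have hr2 : 0 ≤ polyIntegral (r ^ 2) := polyIntegral_nonneg fun x _ => by
    rw [eval_pow]; exact sq_nonneg _
  rw [hI, hQ, map_sq_C_mul_legendre_add hexact c hr,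
    map_sq_C_mul_legendre_add (isExactOfDegree_polyIntegral _) c hr, hQL, polyIntegral_legendre_sq]
  push_cast
  have h1 : 2 / (2 * ((M : ℝ) + 1) + 1) ≤ 2 / (M + 1) := by gcongr; linarith
  have h2 : 2 / ((M : ℝ) + 1) ≤ 3 * (2 / (2 * (M + 1) + 1)) := by
    rw [← mul_div_assoc, div_le_div_iff₀ (by positivity) (by positivity)]; nlinarith
  constructor <;> nlinarith [mul_le_mul_of_nonneg_left h1 (sq_nonneg c),
    mul_le_mul_of_nonneg_left h2 (sq_nonneg c)]

theorem stmt_7 (N : ℕ) (hN : 1 ≤ N)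
    (ξ ρ : Fin (N + 1) → ℝ)
    (hmono : StrictMono ξ) (hfirst : ξ 0 = -1) (hlast : ξ (Fin.last N) = 1)
    (hquad : ∀ φ : Polynomial ℝ, φ.natDegree ≤ 2 * N - 1 →
      ∫ ζ in (-1 : ℝ)..1, φ.eval ζ = ∑ i : Fin (N + 1), φ.eval (ξ i) * ρ i) :
    ∀ φN : Polynomial ℝ, φN.natDegree ≤ N →
      (∫ ζ in (-1 : ℝ)..1, φN.eval ζ ^ 2) ≤
        (∑ i : Fin (N + 1), φN.eval (ξ i) ^ 2 * ρ i) ∧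
      (∑ i : Fin (N + 1), φN.eval (ξ i) ^ 2 * ρ i) ≤
        3 * ∫ ζ in (-1 : ℝ)..1, φN.eval ζ ^ 2 :=
  stmt_7_general N hN ξ ρ hfirst hlast hquad
end

section
/- Let N ≥ 1 and let −1 = ξ₀ < ξ₁ < ⋯ < ξ_N = 1 and ρ₀, …, ρ_N be a Gauss–Lobatto family on [−1,1], i.e. for every real polynomial φ of degree at most 2N−1, ∫_{−1}^{1} φ(ζ) dζ = Σ_{i=0}^{N} φ(ξ_i) ρ_i. Then for every real polynomial p in two variables whose degree in each variable is at most N, ∫_{−1}^{1} ∫_{−1}^{1} p(x,y)² dx dy ≤ Σ_{i=0}^{N} Σ_{j=0}^{N} p(ξ_i, ξ_j)² ρ_i ρ_j ≤ 9 ∫_{−1}^{1} ∫_{−1}^{1} p(x,y)² dx dy. -/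
/-!
For `φ` of degree at most `2N` the quadrature error `Q φ - ∫ φ` is `φ_{2N} E`, where `E` is the
error on `X ^ (2N)`; hence `Q (P²) - ∫ P² = P_N² E` when `deg P ≤ N`, and `E` is the error on any
monic `φ` of degree `2N`. For `φ = (X² - 1) w²`, with `w` vanishing at the interior nodes, the
quadrature is `0` while `φ ≤ 0` on `[-1, 1]`, so `E ≥ 0`: this is the lower bound, and applied to
the squared Lagrange basis polynomials it makes the weights nonnegative. For `φ = (X² - 1) v²`
with `v = M' / N`, `M` the monic Legendre polynomial, the quadrature is `≤ 0` and
`-∫ (X² - 1) M'² = N (N + 1) ∫ M²`, so `E ≤ (N + 1) / N ∫ M²`; since `P_N² ∫ M² ≤ ∫ P²` by the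
minimality of `M`, this gives `P_N² E ≤ 2 ∫ P²`. The square is handled by applying both
one-dimensional bounds in each variable in turn.
-/

open Polynomial

namespace GaussLobatto

noncomputable def integral : ℝ[X] →ₗ[ℝ] ℝ where
  toFun φ := ∫ x in (-1 : ℝ)..1, φ.eval x
  map_add' φ ψ := by
    simpa only [eval_add] using intervalIntegral.integral_add
      (φ.continuous.intervalIntegrable _ _) (ψ.continuous.intervalIntegrable _ _)
  map_smul' c φ := by simp [intervalIntegral.integral_const_mul]

lemma integral_apply (φ : ℝ[X]) : integral φ = ∫ x in (-1 : ℝ)..1, φ.eval x := rfl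

lemma integral_C_mul (c : ℝ) (φ : ℝ[X]) : integral (C c * φ) = c * integral φ := by
  rw [C_mul', map_smul, smul_eq_mul]

lemma integral_nonneg {φ : ℝ[X]} (h : ∀ x ∈ Set.Icc (-1 : ℝ) 1, 0 ≤ φ.eval x) :
    0 ≤ integral φ :=
  intervalIntegral.integral_nonneg (by norm_num) h

lemma integral_sq_nonneg (φ : ℝ[X]) : 0 ≤ integral (φ ^ 2) :=
  integral_nonneg fun x _ => by rw [eval_pow]; positivity

lemma integral_derivative (φ : ℝ[X]) : integral (derivative φ) = φ.eval 1 - φ.eval (-1) :=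
  intervalIntegral.integral_deriv_eq_sub' _ (funext fun _ => φ.deriv)
    (fun _ _ => φ.differentiableAt) φ.derivative.continuous.continuousOn

lemma integral_derivative_mul (f g : ℝ[X]) :
    integral (derivative f * g) =
      f.eval 1 * g.eval 1 - f.eval (-1) * g.eval (-1) - integral (f * derivative g) := by
  have h := integral_derivative (f * g)
  rw [derivative_mul, map_add, eval_mul, eval_mul] at h
  linarith

lemma integral_iterate_derivative_mul (U : ℝ[X]) (j : ℕ)
    (hU : ∀ k < j, (derivative^[k] U).eval 1 = 0 ∧ (derivative^[k] U).eval (-1) = 0)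
    (q : ℝ[X]) :
    integral (derivative^[j] U * q) = (-1) ^ j * integral (U * derivative^[j] q) := by
  induction j generalizing q with
  | zero => simp
  | succ j ih =>
    obtain ⟨h1, h2⟩ := hU j j.lt_succ_self
    rw [Function.iterate_succ_apply', integral_derivative_mul, h1, h2,
      ih (fun k hk => hU k (by omega)), ← Function.iterate_succ_apply]
    ring

structure IsMonicLegendre (N : ℕ) (M : ℝ[X]) : Prop where
  natDegree_le : M.natDegree ≤ N
  coeff_eq_one : M.coeff N = 1
  integral_mul_eq_zero : ∀ q : ℝ[X], q.natDegree < N → integral (M * q) = 0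

lemma eval_iterate_derivative_X_sq_sub_one_pow {N k : ℕ} (hk : k < N) {t : ℝ} (ht : t ^ 2 = 1) :
    (derivative^[k] ((X ^ 2 - 1 : ℝ[X]) ^ N)).eval t = 0 := by
  have hdvd : (X - C t) ^ N ∣ (X ^ 2 - 1 : ℝ[X]) ^ N := by
    refine pow_dvd_pow_of_dvd (dvd_iff_isRoot.mpr ?_) N
    simp [ht]
  have := pow_sub_dvd_iterate_derivative_of_pow_dvd k hdvd
  exact dvd_iff_isRoot.mp ((dvd_pow_self _ (by omega)).trans this)

lemma monic_X_sq_sub_one : (X ^ 2 - 1 : ℝ[X]).Monic := by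
  simpa using monic_X_pow_sub_C (1 : ℝ) two_ne_zero

lemma natDegree_X_sq_sub_one : (X ^ 2 - 1 : ℝ[X]).natDegree = 2 := by
  simpa using natDegree_X_pow_sub_C (n := 2) (r := (1 : ℝ))

theorem exists_isMonicLegendre (N : ℕ) : ∃ M : ℝ[X], IsMonicLegendre N M := by
  set U : ℝ[X] := (X ^ 2 - 1) ^ N
  have hU : U.natDegree = N + N := by
    rw [monic_X_sq_sub_one.natDegree_pow, natDegree_X_sq_sub_one]; ring
  have hlead : U.coeff (N + N) = 1 := by
    rw [← hU]; exact monic_X_sq_sub_one.pow N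
  have hl : ((N + N).descFactorial N : ℝ) ≠ 0 := by
    exact_mod_cast (Nat.descFactorial_pos.mpr (by omega)).ne'
  -- Rodrigues' formula
  refine ⟨C ((N + N).descFactorial N : ℝ)⁻¹ * derivative^[N] U, ⟨?_, ?_, fun q hq => ?_⟩⟩
  · refine (natDegree_C_mul_le _ _).trans ((natDegree_iterate_derivative U N).trans ?_)
    omega
  · rw [coeff_C_mul, coeff_iterate_derivative, hlead, nsmul_one, inv_mul_cancel₀ hl]
  · rw [mul_assoc, integral_C_mul, integral_iterate_derivative_mul U N
      (fun k hk => ⟨eval_iterate_derivative_X_sq_sub_one_pow hk (by norm_num),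
        eval_iterate_derivative_X_sq_sub_one_pow hk (by norm_num)⟩),
      iterate_derivative_eq_zero hq]
    simp

namespace IsMonicLegendre

variable {N : ℕ} {M : ℝ[X]}

lemma integral_mul_eq (hM : IsMonicLegendre N M) (hN : 1 ≤ N) {q : ℝ[X]}
    (hq : q.natDegree ≤ N) : integral (M * q) = q.coeff N * integral (M ^ 2) := by
  set r := q - C (q.coeff N) * M
  have hr : r.natDegree < N := by
    have : r.natDegree ≤ N - 1 :=
      natDegree_le_pred ((natDegree_sub_le_of_le hq
        ((natDegree_C_mul_le _ _).trans hM.natDegree_le)).trans (max_self N).le)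
        (by simp [r, hM.coeff_eq_one])
    omega
  have hsplit : M * q = C (q.coeff N) * M ^ 2 + M * r := by ring
  rw [hsplit, map_add, integral_C_mul, hM.integral_mul_eq_zero r hr, add_zero]

lemma coeff_sq_mul_integral_le (hM : IsMonicLegendre N M) (hN : 1 ≤ N) {P : ℝ[X]}
    (hP : P.natDegree ≤ N) : P.coeff N ^ 2 * integral (M ^ 2) ≤ integral (P ^ 2) := by
  have h := integral_sq_nonneg (P - C (P.coeff N) * M)
  have hexpand : (P - C (P.coeff N) * M) ^ 2 =
      P ^ 2 - C (2 * P.coeff N) * (M * P) + C (P.coeff N ^ 2) * M ^ 2 := by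
    simp only [map_mul, map_pow, map_ofNat]; ring
  rw [hexpand, map_add, map_sub, integral_C_mul, integral_C_mul, hM.integral_mul_eq hN hP] at h
  linarith

lemma integral_X_sq_sub_one_mul_derivative_sq (hM : IsMonicLegendre N M) (hN : 1 ≤ N) :
    integral ((X ^ 2 - 1) * derivative M ^ 2) = -(N * (N + 1)) * integral (M ^ 2) := by
  set f : ℝ[X] := (X ^ 2 - 1) * derivative M
  have hM' : (derivative M).natDegree ≤ N - 1 :=
    (natDegree_derivative_le M).trans (Nat.sub_le_sub_right hM.natDegree_le 1)
  have hf : f.natDegree ≤ N + 1 :=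
    natDegree_mul_le.trans (by rw [natDegree_X_sq_sub_one]; omega)
  have hfc : f.coeff (N + 1) = N := by
    have h := coeff_mul_add_eq_of_natDegree_le natDegree_X_sq_sub_one.le hM'
    rw [show 2 + (N - 1) = N + 1 by omega, coeff_derivative, Nat.sub_add_cancel hN,
      hM.coeff_eq_one] at h
    simpa [f, coeff_one, Nat.cast_sub hN] using h
  have hDf : (derivative f).natDegree ≤ N :=
    (natDegree_derivative_le f).trans (by omega)
  have hparts := integral_derivative_mul f M
  simp only [f, eval_mul, eval_sub, eval_pow, eval_X, eval_one] at hparts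
  rw [mul_comm, hM.integral_mul_eq hN hDf, coeff_derivative, hfc] at hparts
  rw [show (X ^ 2 - 1) * derivative M ^ 2 = f * derivative M by ring]
  linarith

end IsMonicLegendre

noncomputable def quadrature {N : ℕ} (ξ ρ : Fin (N + 1) → ℝ) : ℝ[X] →ₗ[ℝ] ℝ where
  toFun φ := ∑ i, φ.eval (ξ i) * ρ i
  map_add' φ ψ := by simp only [eval_add, add_mul, Finset.sum_add_distrib]
  map_smul' c φ := by
    simp only [eval_smul, smul_eq_mul, mul_assoc, Finset.mul_sum, RingHom.id_apply]

lemma quadrature_apply {N : ℕ} (ξ ρ : Fin (N + 1) → ℝ) (φ : ℝ[X]) :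
    quadrature ξ ρ φ = ∑ i, φ.eval (ξ i) * ρ i := rfl

noncomputable def quadratureError {N : ℕ} (ξ ρ : Fin (N + 1) → ℝ) : ℝ[X] →ₗ[ℝ] ℝ :=
  quadrature ξ ρ - integral

lemma quadratureError_apply {N : ℕ} (ξ ρ : Fin (N + 1) → ℝ) (φ : ℝ[X]) :
    quadratureError ξ ρ φ = quadrature ξ ρ φ - integral φ := rfl

structure IsGaussLobatto (N : ℕ) (ξ ρ : Fin (N + 1) → ℝ) : Prop where
  strictMono : StrictMono ξ
  apply_zero : ξ 0 = -1
  apply_last : ξ (Fin.last N) = 1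
  integral_eq_quadrature : ∀ φ : ℝ[X], φ.natDegree ≤ 2 * N - 1 → integral φ = quadrature ξ ρ φ

namespace IsGaussLobatto

variable {N : ℕ} {ξ ρ : Fin (N + 1) → ℝ}

lemma mem_Icc (h : IsGaussLobatto N ξ ρ) (i : Fin (N + 1)) : ξ i ∈ Set.Icc (-1 : ℝ) 1 :=
  ⟨h.apply_zero ▸ h.strictMono.monotone (Fin.zero_le i),
    h.apply_last ▸ h.strictMono.monotone (Fin.le_last i)⟩

lemma quadratureError_eq_coeff_mul (h : IsGaussLobatto N ξ ρ) {φ : ℝ[X]}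
    (hφ : φ.natDegree ≤ 2 * N) :
    quadratureError ξ ρ φ = φ.coeff (2 * N) * quadratureError ξ ρ (X ^ (2 * N)) := by
  set r := φ - C (φ.coeff (2 * N)) * X ^ (2 * N)
  have hr : r.natDegree ≤ 2 * N - 1 :=
    natDegree_le_pred ((natDegree_sub_le_of_le hφ
      ((natDegree_C_mul_le _ _).trans (natDegree_X_pow_le _))).trans (max_self _).le)
      (by simp [r])
  have hsplit : φ = C (φ.coeff (2 * N)) * X ^ (2 * N) + r := by ring
  have hr0 : quadratureError ξ ρ r = 0 := by
    rw [quadratureError_apply, h.integral_eq_quadrature r hr, sub_self]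
  rw [congrArg (quadratureError ξ ρ) hsplit, map_add, hr0, add_zero, C_mul', map_smul,
    smul_eq_mul]

lemma quadratureError_sq (h : IsGaussLobatto N ξ ρ) {P : ℝ[X]} (hP : P.natDegree ≤ N) :
    quadratureError ξ ρ (P ^ 2) = P.coeff N ^ 2 * quadratureError ξ ρ (X ^ (2 * N)) := by
  rw [h.quadratureError_eq_coeff_mul (natDegree_pow_le_of_le 2 hP),
    coeff_pow_of_natDegree_le hP]

lemma quadratureError_X_sq_sub_one_mul_sq (h : IsGaussLobatto N ξ ρ) (hN : 1 ≤ N) {v : ℝ[X]}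
    (hv : v.natDegree ≤ N - 1) (hv1 : v.coeff (N - 1) = 1) :
    quadratureError ξ ρ ((X ^ 2 - 1) * v ^ 2) = quadratureError ξ ρ (X ^ (2 * N)) := by
  have hdeg : 2 + 2 * (N - 1) = 2 * N := by omega
  have hcoeff := coeff_mul_add_eq_of_natDegree_le natDegree_X_sq_sub_one.le
    (natDegree_pow_le_of_le 2 hv)
  rw [coeff_pow_of_natDegree_le hv, hv1, hdeg] at hcoeff
  rw [h.quadratureError_eq_coeff_mul (natDegree_mul_le.trans
      (by have := natDegree_pow_le_of_le 2 hv; rw [natDegree_X_sq_sub_one]; omega)),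
    hcoeff]
  simp [coeff_one]

lemma quadratureError_X_pow_nonneg (h : IsGaussLobatto N ξ ρ) (hN : 1 ≤ N) :
    0 ≤ quadratureError ξ ρ (X ^ (2 * N)) := by
  set w := Lagrange.nodal (Finset.Ioo 0 (Fin.last N)) ξ
  have hw : w.natDegree = N - 1 := by simp [w, Lagrange.natDegree_nodal]
  have hquad : quadrature ξ ρ ((1 - X ^ 2) * w ^ 2) = 0 := by
    refine (quadrature_apply ξ ρ _).trans (Finset.sum_eq_zero fun i _ => ?_)
    by_cases hi : i ∈ Finset.Ioo 0 (Fin.last N)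
    · have hwi : w.eval (ξ i) = 0 := Lagrange.eval_nodal_at_node hi
      simp [hwi]
    · have hξi : ξ i ^ 2 = 1 := by
        simp only [Finset.mem_Ioo, Fin.pos_iff_ne_zero, Fin.lt_last_iff_ne_last, not_and_or,
          not_ne_iff] at hi
        rcases hi with rfl | rfl <;> simp [h.apply_zero, h.apply_last]
      simp [hξi]
  have hint : 0 ≤ integral ((1 - X ^ 2) * w ^ 2) := integral_nonneg fun x hx => by
    simp only [eval_mul, eval_sub, eval_one, eval_pow, eval_X]
    exact mul_nonneg (by nlinarith [hx.1, hx.2]) (sq_nonneg _)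
  rw [← h.quadratureError_X_sq_sub_one_mul_sq hN hw.le (hw ▸ Lagrange.nodal_monic),
    show (X ^ 2 - 1) * w ^ 2 = -((1 - X ^ 2) * w ^ 2) by ring, map_neg, quadratureError_apply,
    hquad]
  linarith

lemma integral_sq_le_quadrature (h : IsGaussLobatto N ξ ρ) (hN : 1 ≤ N) {P : ℝ[X]}
    (hP : P.natDegree ≤ N) : integral (P ^ 2) ≤ quadrature ξ ρ (P ^ 2) := by
  have herr := h.quadratureError_sq hP
  rw [quadratureError_apply] at herr
  nlinarith [h.quadratureError_X_pow_nonneg hN, sq_nonneg (P.coeff N)]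

lemma weight_nonneg (h : IsGaussLobatto N ξ ρ) (hN : 1 ≤ N) (i : Fin (N + 1)) : 0 ≤ ρ i := by
  classical
  have hinj : Set.InjOn ξ (Finset.univ : Finset (Fin (N + 1))) :=
    h.strictMono.injective.injOn
  set ℓ := Lagrange.basis Finset.univ ξ i
  have hℓ : ℓ.natDegree ≤ N := by
    simp [ℓ, Lagrange.natDegree_basis hinj (Finset.mem_univ i)]
  have hquad : quadrature ξ ρ (ℓ ^ 2) = ρ i := by
    rw [quadrature_apply, Finset.sum_eq_single i]
    · simp [ℓ, Lagrange.eval_basis_self hinj (Finset.mem_univ i)]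
    · intro j _ hji
      simp [ℓ, Lagrange.eval_basis_of_ne hji.symm (Finset.mem_univ j)]
    · simp
  exact hquad ▸ (integral_sq_nonneg ℓ).trans (h.integral_sq_le_quadrature hN hℓ)

lemma quadratureError_X_pow_le (h : IsGaussLobatto N ξ ρ) (hN : 1 ≤ N) {v : ℝ[X]}
    (hv : v.natDegree ≤ N - 1) (hv1 : v.coeff (N - 1) = 1) :
    quadratureError ξ ρ (X ^ (2 * N)) ≤ -integral ((X ^ 2 - 1) * v ^ 2) := by
  have hquad : quadrature ξ ρ ((X ^ 2 - 1) * v ^ 2) ≤ 0 := by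
    refine (quadrature_apply ξ ρ _).trans_le (Finset.sum_nonpos fun i _ => ?_)
    have hξ := h.mem_Icc i
    have hsq : ξ i ^ 2 - 1 ≤ 0 := by nlinarith [hξ.1, hξ.2]
    simp only [eval_mul, eval_sub, eval_pow, eval_X, eval_one]
    exact mul_nonpos_of_nonpos_of_nonneg
      (mul_nonpos_of_nonpos_of_nonneg hsq (sq_nonneg _)) (h.weight_nonneg hN i)
  rw [← h.quadratureError_X_sq_sub_one_mul_sq hN hv hv1, quadratureError_apply]
  linarith

lemma quadratureError_X_pow_le_integral (h : IsGaussLobatto N ξ ρ) (hN : 1 ≤ N) {M : ℝ[X]}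
    (hM : IsMonicLegendre N M) :
    quadratureError ξ ρ (X ^ (2 * N)) ≤ (N + 1) / N * integral (M ^ 2) := by
  set v := C (N : ℝ)⁻¹ * derivative M
  have hv : v.natDegree ≤ N - 1 := (natDegree_C_mul_le _ _).trans
    ((natDegree_derivative_le M).trans (Nat.sub_le_sub_right hM.natDegree_le 1))
  have hv1 : v.coeff (N - 1) = 1 := by
    rw [coeff_C_mul, coeff_derivative, Nat.sub_add_cancel hN, hM.coeff_eq_one,
      Nat.cast_sub hN]
    field_simp
    ring
  have hv2 : (X ^ 2 - 1) * v ^ 2 = C ((N : ℝ)⁻¹ ^ 2) * ((X ^ 2 - 1) * derivative M ^ 2) := by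
    simp only [v, map_pow]; ring
  refine (h.quadratureError_X_pow_le hN hv hv1).trans_eq ?_
  rw [hv2, integral_C_mul, hM.integral_X_sq_sub_one_mul_derivative_sq hN]
  field_simp

theorem quadrature_sq_le (h : IsGaussLobatto N ξ ρ) (hN : 1 ≤ N) {P : ℝ[X]}
    (hP : P.natDegree ≤ N) : quadrature ξ ρ (P ^ 2) ≤ 3 * integral (P ^ 2) := by
  obtain ⟨M, hM⟩ := exists_isMonicLegendre N
  have herr := h.quadratureError_sq hP
  rw [quadratureError_apply] at herr
  have hE := h.quadratureError_X_pow_le_integral hN hM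
  have hmin := hM.coeff_sq_mul_integral_le hN hP
  have hN1 : (1 : ℝ) ≤ N := by exact_mod_cast hN
  have hratio : ((N : ℝ) + 1) / N ≤ 2 := by rw [div_le_iff₀ (by positivity)]; linarith
  calc quadrature ξ ρ (P ^ 2)
      = integral (P ^ 2) + P.coeff N ^ 2 * quadratureError ξ ρ (X ^ (2 * N)) := by linarith
    _ ≤ integral (P ^ 2) + P.coeff N ^ 2 * ((N + 1) / N * integral (M ^ 2)) :=
      add_le_add_right (mul_le_mul_of_nonneg_left hE (sq_nonneg _)) _
    _ = integral (P ^ 2) + (N + 1) / N * (P.coeff N ^ 2 * integral (M ^ 2)) := by ring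
    _ ≤ integral (P ^ 2) + 2 * integral (P ^ 2) := add_le_add_right
      (mul_le_mul hratio hmin (mul_nonneg (sq_nonneg _) (integral_sq_nonneg M)) zero_le_two) _
    _ = 3 * integral (P ^ 2) := by ring

theorem integral_sq_le_sum_and_sum_le_three_mul (h : IsGaussLobatto N ξ ρ) (hN : 1 ≤ N) {P : ℝ[X]}
    (hP : P.natDegree ≤ N) :
    (∫ x in (-1 : ℝ)..1, P.eval x ^ 2) ≤ ∑ i, P.eval (ξ i) ^ 2 * ρ i ∧
      ∑ i, P.eval (ξ i) ^ 2 * ρ i ≤ 3 * ∫ x in (-1 : ℝ)..1, P.eval x ^ 2 := by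
  simpa only [integral_apply, quadrature_apply, eval_pow] using
    And.intro (h.integral_sq_le_quadrature hN hP) (h.quadrature_sq_le hN hP)

end IsGaussLobatto

end GaussLobatto

section TensorProduct

variable {n : ℕ} (ξ ρ : Fin n → ℝ) {a b : ℝ} {g : ℝ → ℝ → ℝ}

lemma integral_sum_mul (hg : Continuous (Function.uncurry g)) :
    ∫ x in a..b, ∑ j, g x (ξ j) * ρ j = ∑ j, (∫ x in a..b, g x (ξ j)) * ρ j := by
  rw [intervalIntegral.integral_finsetSum (f := fun j x => g x (ξ j) * ρ j) fun j _ =>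
    ((hg.uncurry_right (ξ j)).mul continuous_const).intervalIntegrable _ _]
  simp_rw [intervalIntegral.integral_mul_const]

lemma sum_sum_mul_mul_eq (g : ℝ → ℝ → ℝ) :
    ∑ i, ∑ j, g (ξ i) (ξ j) * (ρ i * ρ j) = ∑ j, (∑ i, g (ξ i) (ξ j) * ρ i) * ρ j := by
  rw [Finset.sum_comm]
  simp_rw [Finset.sum_mul, mul_assoc]

lemma integral_integral_le_sum_sum (hab : a ≤ b) (hρ : ∀ j, 0 ≤ ρ j)
    (hg : Continuous (Function.uncurry g))
    (hrow : ∀ x, ∫ y in a..b, g x y ≤ ∑ j, g x (ξ j) * ρ j)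
    (hcol : ∀ y, ∫ x in a..b, g x y ≤ ∑ i, g (ξ i) y * ρ i) :
    ∫ x in a..b, ∫ y in a..b, g x y ≤ ∑ i, ∑ j, g (ξ i) (ξ j) * (ρ i * ρ j) :=
  calc ∫ x in a..b, ∫ y in a..b, g x y
      ≤ ∫ x in a..b, ∑ j, g x (ξ j) * ρ j :=
        intervalIntegral.integral_mono_on hab
          ((intervalIntegral.continuous_parametric_intervalIntegral_of_continuous' hg a b
            ).intervalIntegrable _ _)
          ((continuous_finsetSum _ fun j _ =>
            (hg.uncurry_right (ξ j)).mul continuous_const).intervalIntegrable _ _)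
          fun x _ => hrow x
    _ = ∑ j, (∫ x in a..b, g x (ξ j)) * ρ j := integral_sum_mul ξ ρ hg
    _ ≤ ∑ j, (∑ i, g (ξ i) (ξ j) * ρ i) * ρ j :=
        Finset.sum_le_sum fun j _ => mul_le_mul_of_nonneg_right (hcol _) (hρ j)
    _ = ∑ i, ∑ j, g (ξ i) (ξ j) * (ρ i * ρ j) := (sum_sum_mul_mul_eq ξ ρ g).symm

lemma sum_sum_le_sq_mul_integral_integral (hab : a ≤ b) (hρ : ∀ j, 0 ≤ ρ j)
    (hg : Continuous (Function.uncurry g)) {C : ℝ} (hC : 0 ≤ C)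
    (hrow : ∀ x, ∑ j, g x (ξ j) * ρ j ≤ C * ∫ y in a..b, g x y)
    (hcol : ∀ y, ∑ i, g (ξ i) y * ρ i ≤ C * ∫ x in a..b, g x y) :
    ∑ i, ∑ j, g (ξ i) (ξ j) * (ρ i * ρ j) ≤ C ^ 2 * ∫ x in a..b, ∫ y in a..b, g x y :=
  calc ∑ i, ∑ j, g (ξ i) (ξ j) * (ρ i * ρ j)
      = ∑ j, (∑ i, g (ξ i) (ξ j) * ρ i) * ρ j := sum_sum_mul_mul_eq ξ ρ g
    _ ≤ ∑ j, (C * ∫ x in a..b, g x (ξ j)) * ρ j :=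
        Finset.sum_le_sum fun j _ => mul_le_mul_of_nonneg_right (hcol _) (hρ j)
    _ = C * ∫ x in a..b, ∑ j, g x (ξ j) * ρ j := by
        rw [integral_sum_mul ξ ρ hg, Finset.mul_sum]
        simp_rw [mul_assoc]
    _ ≤ C * ∫ x in a..b, C * ∫ y in a..b, g x y := by
        gcongr
        refine intervalIntegral.integral_mono_on hab
          ((continuous_finsetSum _ fun j _ =>
            (hg.uncurry_right (ξ j)).mul continuous_const).intervalIntegrable _ _)
          ((continuous_const.mul
            (intervalIntegral.continuous_parametric_intervalIntegral_of_continuous' hg a b)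
            ).intervalIntegrable _ _)
          fun x _ => hrow x
    _ = C ^ 2 * ∫ x in a..b, ∫ y in a..b, g x y := by
        rw [intervalIntegral.integral_const_mul]; ring

end TensorProduct

namespace MvPolynomial

lemma exists_natDegree_le_eval_eq_fst (p : MvPolynomial (Fin 2) ℝ) (y : ℝ) :
    ∃ P : ℝ[X], P.natDegree ≤ p.degreeOf 0 ∧ ∀ x, P.eval x = eval ![x, y] p :=
  ⟨(finSuccEquiv ℝ 1 p).map (eval ![y]),
    natDegree_map_le.trans (natDegree_finSuccEquiv p).le,
    fun x => (eval_eq_eval_mv_eval' ![y] x p).symm⟩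

lemma exists_natDegree_le_eval_eq_snd (p : MvPolynomial (Fin 2) ℝ) (x : ℝ) :
    ∃ P : ℝ[X], P.natDegree ≤ p.degreeOf 1 ∧ ∀ y, P.eval y = eval ![x, y] p := by
  obtain ⟨P, hP, hPeval⟩ :=
    exists_natDegree_le_eval_eq_fst (rename (Equiv.swap 0 1) p) x
  have hdeg := degreeOf_rename_of_injective (p := p) (Equiv.swap (0 : Fin 2) 1).injective 1
  rw [Equiv.swap_apply_right] at hdeg
  refine ⟨P, hdeg ▸ hP, fun y => ?_⟩
  have hswap : ![y, x] ∘ Equiv.swap (0 : Fin 2) 1 = ![x, y] := by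
    ext i; fin_cases i <;> rfl
  rw [hPeval, eval_rename, hswap]

end MvPolynomial

theorem stmt_10 (N : ℕ) (hN : 1 ≤ N)
    (ξ ρ : Fin (N + 1) → ℝ)
    (hmono : StrictMono ξ) (hfirst : ξ 0 = -1) (hlast : ξ (Fin.last N) = 1)
    (hquad : ∀ φ : Polynomial ℝ, φ.natDegree ≤ 2 * N - 1 →
      ∫ ζ in (-1 : ℝ)..1, φ.eval ζ = ∑ i : Fin (N + 1), φ.eval (ξ i) * ρ i) :
    ∀ p : MvPolynomial (Fin 2) ℝ, (∀ k : Fin 2, p.degreeOf k ≤ N) →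
      (∫ x in (-1 : ℝ)..1, ∫ y in (-1 : ℝ)..1, (MvPolynomial.eval ![x, y] p) ^ 2) ≤
        (∑ i : Fin (N + 1), ∑ j : Fin (N + 1),
          (MvPolynomial.eval ![ξ i, ξ j] p) ^ 2 * (ρ i * ρ j)) ∧
      (∑ i : Fin (N + 1), ∑ j : Fin (N + 1),
          (MvPolynomial.eval ![ξ i, ξ j] p) ^ 2 * (ρ i * ρ j)) ≤
        9 * ∫ x in (-1 : ℝ)..1, ∫ y in (-1 : ℝ)..1, (MvPolynomial.eval ![x, y] p) ^ 2 := by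
  intro p hp
  have hGL : GaussLobatto.IsGaussLobatto N ξ ρ := ⟨hmono, hfirst, hlast, hquad⟩
  let g : ℝ → ℝ → ℝ := fun x y => MvPolynomial.eval ![x, y] p ^ 2
  have hg : Continuous (Function.uncurry g) :=
    ((MvPolynomial.continuous_eval p).comp (by fun_prop)).pow 2
  have hrow (x : ℝ) : (∫ y in (-1 : ℝ)..1, g x y) ≤ ∑ j, g x (ξ j) * ρ j ∧
      ∑ j, g x (ξ j) * ρ j ≤ 3 * ∫ y in (-1 : ℝ)..1, g x y := by
    obtain ⟨P, hP, hPeval⟩ := MvPolynomial.exists_natDegree_le_eval_eq_snd p x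
    simpa only [g, ← hPeval] using hGL.integral_sq_le_sum_and_sum_le_three_mul hN (hP.trans (hp 1))
  have hcol (y : ℝ) : (∫ x in (-1 : ℝ)..1, g x y) ≤ ∑ i, g (ξ i) y * ρ i ∧
      ∑ i, g (ξ i) y * ρ i ≤ 3 * ∫ x in (-1 : ℝ)..1, g x y := by
    obtain ⟨P, hP, hPeval⟩ := MvPolynomial.exists_natDegree_le_eval_eq_fst p y
    simpa only [g, ← hPeval] using hGL.integral_sq_le_sum_and_sum_le_three_mul hN (hP.trans (hp 0))
  have hρ := hGL.weight_nonneg hN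
  refine ⟨integral_integral_le_sum_sum ξ ρ (by norm_num) hρ hg (fun x => (hrow x).1)
    (fun y => (hcol y).1), ?_⟩
  exact (sum_sum_le_sq_mul_integral_integral ξ ρ (by norm_num) hρ hg zero_le_three
    (fun x => (hrow x).2) (fun y => (hcol y).2)).trans_eq (by norm_num [g])
end

section
/- Let H be a real Hilbert space, α > 0, γ > 0, M ≥ 1, let τ₁, …, τ_M be positive reals, let u⁰ ∈ H and f¹, …, f^M ∈ H, and define u^m for 1 ≤ m ≤ M by (u^m − u^{m−1})/τ_m + α u^m = γ f^m, i.e. u^m = (1 + α τ_m)^{-1} (u^{m−1} + τ_m γ f^m). Then for every m with 1 ≤ m ≤ M, ‖u^m‖² + α Σ_{j=1}^{m} τ_j ‖u^j‖² ≤ ‖u⁰‖² + (γ²/α) Σ_{j=1}^{m} τ_j ‖f^j‖². -/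
/-!
Testing the backward Euler step `(uᵐ - uᵐ⁻¹) + α τₘ uᵐ = τₘ γ fᵐ` with `uᵐ` and using
`2⟪a - b, a⟫ = ‖a‖² - ‖b‖² + ‖a - b‖² ≥ ‖a‖² - ‖b‖²` together with Young's inequality
`2 γ ⟪f, u⟫ ≤ (γ² / α) ‖f‖² + α ‖u‖²` gives the one-step energy inequality
`‖uᵐ‖² + α τₘ ‖uᵐ‖² ≤ ‖uᵐ⁻¹‖² + (γ² / α) τₘ ‖fᵐ‖²`, which telescopes.
-/

open RealInnerProductSpace Finset

section EnergyStep

variable {H : Type*} [NormedAddCommGroup H] [InnerProductSpace ℝ H]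

theorem sq_norm_sub_sq_norm_le_two_inner_sub (a b : H) :
    ‖b‖ ^ 2 - ‖a‖ ^ 2 ≤ 2 * ⟪b - a, b⟫ := by
  have hid : ‖b - a‖ ^ 2 = ‖b‖ ^ 2 - 2 * ⟪b, a⟫ + ‖a‖ ^ 2 := norm_sub_sq_real b a
  rw [inner_sub_left, real_inner_self_eq_norm_sq, real_inner_comm]
  linarith [sq_nonneg ‖b - a‖]

theorem two_mul_inner_le_div_add_mul {α : ℝ} (hα : 0 < α) (γ : ℝ) (g b : H) :
    2 * (γ * ⟪g, b⟫) ≤ γ ^ 2 / α * ‖g‖ ^ 2 + α * ‖b‖ ^ 2 := by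
  have hcs : γ * ⟪g, b⟫ ≤ ‖γ • g‖ * ‖b‖ := by
    rw [← real_inner_smul_left]; exact real_inner_le_norm _ _
  rw [norm_smul, Real.norm_eq_abs] at hcs
  have hyoung : 2 * (|γ| * ‖g‖ * ‖b‖) ≤ γ ^ 2 / α * ‖g‖ ^ 2 + α * ‖b‖ ^ 2 := by
    have h : 0 ≤ (|γ| * ‖g‖ - α * ‖b‖) ^ 2 / α := by positivity
    rw [sub_sq, mul_pow, mul_pow, sq_abs] at h
    field_simp at h ⊢
    linarith
  linarith

theorem backwardEuler_energy_step {α t : ℝ} (hα : 0 < α) (ht : 0 ≤ t) (γ : ℝ) {a b g : H}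
    (h : b = (1 + α * t)⁻¹ • (a + (t * γ) • g)) :
    ‖b‖ ^ 2 + α * (t * ‖b‖ ^ 2) ≤ ‖a‖ ^ 2 + γ ^ 2 / α * (t * ‖g‖ ^ 2) := by
  have hscheme : b - a = (t * γ) • g - (α * t) • b := by
    have hb : (1 + α * t) • b = a + (t * γ) • g := by
      rw [h, smul_smul, mul_inv_cancel₀ (by positivity), one_smul]
    linear_combination (norm := module) hb
  have htested : ⟪b - a, b⟫ = t * (γ * ⟪g, b⟫) - α * t * ‖b‖ ^ 2 := by
    rw [hscheme, inner_sub_left, real_inner_smul_left, real_inner_smul_left,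
      real_inner_self_eq_norm_sq]
    ring
  nlinarith [sq_norm_sub_sq_norm_le_two_inner_sub a b,
    mul_le_mul_of_nonneg_left (two_mul_inner_le_div_add_mul hα γ g b) ht]

end EnergyStep

theorem add_sum_Icc_le_of_forall_add_le {E d s : ℕ → ℝ} {M : ℕ}
    (hstep : ∀ m, 1 ≤ m → m ≤ M → E m + d m ≤ E (m - 1) + s m) :
    ∀ m ≤ M, E m + ∑ j ∈ Icc 1 m, d j ≤ E 0 + ∑ j ∈ Icc 1 m, s j := by
  intro m
  induction m with
  | zero => simp
  | succ n ih =>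
    intro hn
    have hlast := hstep (n + 1) (by omega) hn
    rw [sum_Icc_succ_top (by omega), sum_Icc_succ_top (by omega)]
    simp only [add_tsub_cancel_right] at hlast
    linarith [ih (by omega)]

theorem stmt_12_general {H : Type*} [NormedAddCommGroup H] [InnerProductSpace ℝ H]
    (α γ : ℝ) (hα : 0 < α)
    (M : ℕ)
    (τ : ℕ → ℝ) (hτ : ∀ m, 1 ≤ m → m ≤ M → 0 < τ m)
    (u f : ℕ → H)
    (hrec : ∀ m, 1 ≤ m → m ≤ M →
      u m = (1 + α * τ m)⁻¹ • (u (m - 1) + (τ m * γ) • f m)) :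
    ∀ m, 1 ≤ m → m ≤ M →
      ‖u m‖ ^ 2 + α * ∑ j ∈ Finset.Icc 1 m, τ j * ‖u j‖ ^ 2 ≤
        ‖u 0‖ ^ 2 + (γ ^ 2 / α) * ∑ j ∈ Finset.Icc 1 m, τ j * ‖f j‖ ^ 2 := by
  intro m _ hm
  rw [mul_sum, mul_sum]
  exact add_sum_Icc_le_of_forall_add_le (E := fun j => ‖u j‖ ^ 2)
    (fun j hj hjM => backwardEuler_energy_step hα (hτ j hj hjM).le γ (hrec j hj hjM)) m hm

theorem stmt_12 {H : Type*} [NormedAddCommGroup H] [InnerProductSpace ℝ H]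
    (α γ : ℝ) (hα : 0 < α) (hγ : 0 < γ)
    (M : ℕ) (hM : 1 ≤ M)
    (τ : ℕ → ℝ) (hτ : ∀ m, 1 ≤ m → m ≤ M → 0 < τ m)
    (u f : ℕ → H)
    (hrec : ∀ m, 1 ≤ m → m ≤ M →
      u m = (1 + α * τ m)⁻¹ • (u (m - 1) + (τ m * γ) • f m)) :
    ∀ m, 1 ≤ m → m ≤ M →
      ‖u m‖ ^ 2 + α * ∑ j ∈ Finset.Icc 1 m, τ j * ‖u j‖ ^ 2 ≤
        ‖u 0‖ ^ 2 + (γ ^ 2 / α) * ∑ j ∈ Finset.Icc 1 m, τ j * ‖f j‖ ^ 2 :=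
  stmt_12_general α γ hα M τ hτ u f hrec
end

section
/- Let H be a real Hilbert space, α > 0, T > 0, M ≥ 1, set τ = T/M and t_m = mτ for 0 ≤ m ≤ M. Let u : ℝ → H be twice continuously differentiable on [0, T], set f(t) = u'(t) + α u(t), and define the backward Euler approximations by u⁰ = u(0) and (u^m − u^{m−1})/τ + α u^m = f(t_m) for 1 ≤ m ≤ M. Then max_{0 ≤ m ≤ M} ‖u(t_m) − u^m‖ ≤ (τ / (3α)^{1/2}) (∫₀^T ‖u''(s)‖² ds)^{1/2}. -/
/-!
With `t_k = k τ`, the error `e_k = u(t_k) - v_k` satisfies `(1 + ατ) e_{k+1} = e_k + z_k`, where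
`z_k = u(t_{k+1}) - u(t_k) - τ u'(t_{k+1}) = ∫_{t_k}^{t_{k+1}} (t_k - s) u''(s) ds`
is the consistency error, so `‖z_k‖ ≤ (τ³/3)^{1/2} ‖u''‖_{L²(t_k, t_{k+1})}` by Cauchy–Schwarz.
Since `(τ³/3)^{1/2} = C (ατ)^{1/2}` with `C = τ / (3α)^{1/2}`, the bound
`‖e_k‖ ≤ C ‖u''‖_{L²(0, t_k)}` survives each step: the damping factor `(1 + ατ)⁻¹` absorbs the
new local error because `√A + √(ατ) √B ≤ (1 + ατ) √(A + B)`.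
-/

open MeasureTheory Set

theorem sqrt_add_sqrt_mul_sqrt_le {x y q : ℝ} (hx : 0 ≤ x) (hy : 0 ≤ y) (hq : 0 ≤ q) :
    √x + √q * √y ≤ (1 + q) * √(x + y) := by
  have key : (√x + √q * √y) ^ 2 ≤ ((1 + q) * √(x + y)) ^ 2 := by
    have hx' := Real.sq_sqrt hx
    have hy' := Real.sq_sqrt hy
    have hq' := Real.sq_sqrt hq
    rw [mul_pow, Real.sq_sqrt (add_nonneg hx hy)]
    nlinarith [sq_nonneg (√q * √x - √y), Real.sqrt_nonneg x, Real.sqrt_nonneg y,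
      Real.sqrt_nonneg q, mul_nonneg hq (add_nonneg hx hy)]
  exact (pow_le_pow_iff_left₀ (by positivity) (by positivity) two_ne_zero).mp key

theorem backward_euler_error_step {E : Type*} [AddCommGroup E] [Module ℝ E] {τ α : ℝ}
    (hτ : τ ≠ 0) {u₀ u₁ du₁ v₀ v₁ : E} (h : τ⁻¹ • (v₁ - v₀) + α • v₁ = du₁ + α • u₁) :
    (1 + α * τ) • (u₁ - v₁) = (u₀ - v₀) + (u₁ - u₀ - τ • du₁) := by
  have h' : τ • τ⁻¹ • (v₁ - v₀) + τ • α • v₁ = τ • du₁ + τ • α • u₁ := by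
    rw [← smul_add, h, smul_add]
  rw [smul_smul, mul_inv_cancel₀ hτ, one_smul] at h'
  linear_combination (norm := module) -h'

theorem norm_le_mul_sqrt_sum_of_damped_step {E : Type*} [SeminormedAddCommGroup E]
    [NormedSpace ℝ E] {q C : ℝ} (hq : 0 ≤ q) (hC : 0 ≤ C) {e z : ℕ → E} {B : ℕ → ℝ}
    (hB : ∀ k, 0 ≤ B k) (he0 : e 0 = 0) {n : ℕ}
    (hstep : ∀ k < n, (1 + q) • e (k + 1) = e k + z k)
    (hz : ∀ k < n, ‖z k‖ ≤ C * √q * √(B k)) :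
    ‖e n‖ ≤ C * √(∑ k ∈ Finset.range n, B k) := by
  induction n with
  | zero => simp [he0]
  | succ n ih =>
    have ih := ih (fun k hk => hstep k (by omega)) (fun k hk => hz k (by omega))
    have hS : 0 ≤ ∑ k ∈ Finset.range n, B k := Finset.sum_nonneg fun k _ => hB k
    have hq1 : 0 < 1 + q := by linarith
    have he : e (n + 1) = (1 + q)⁻¹ • (e n + z n) := by
      rw [← hstep n n.lt_succ_self, smul_smul, inv_mul_cancel₀ hq1.ne', one_smul]
    calc ‖e (n + 1)‖ ≤ (1 + q)⁻¹ * (‖e n‖ + ‖z n‖) := by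
          rw [he, norm_smul, Real.norm_of_nonneg (inv_nonneg.2 hq1.le)]
          gcongr
          exact norm_add_le _ _
      _ ≤ (1 + q)⁻¹ * (C * (√(∑ k ∈ Finset.range n, B k) + √q * √(B n))) := by
          have := hz n n.lt_succ_self
          gcongr
          linarith
      _ ≤ (1 + q)⁻¹ * (C * ((1 + q) * √(∑ k ∈ Finset.range n, B k + B n))) := by
          gcongr
          exact sqrt_add_sqrt_mul_sqrt_le hS (hB n) hq
      _ = C * √(∑ k ∈ Finset.range (n + 1), B k) := by
          rw [Finset.sum_range_succ]
          field_simp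

theorem sub_sub_smul_deriv_eq_integral {E : Type*} [NormedAddCommGroup E] [NormedSpace ℝ E]
    [CompleteSpace E] {u u' u'' : ℝ → E} {a b : ℝ}
    (hu : ∀ t ∈ uIcc a b, HasDerivAt u (u' t) t) (hu' : ∀ t ∈ uIcc a b, HasDerivAt u' (u'' t) t)
    (hc : ContinuousOn u'' (uIcc a b)) :
    u b - u a - (b - a) • u' b = ∫ s in a..b, (a - s) • u'' s := by
  have hderiv : ∀ s ∈ uIcc a b,
      HasDerivAt (fun t => u t + (a - t) • u' t) ((a - s) • u'' s) s := by
    intro s hs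
    convert (hu s hs).add (((hasDerivAt_id s).const_sub a).smul (hu' s hs)) using 1
    · rfl
    · simp only [id]
      module
  rw [intervalIntegral.integral_eq_sub_of_hasDerivAt hderiv
    (((continuousOn_const.sub continuousOn_id).smul hc).intervalIntegrable)]
  module

theorem integral_mul_le_sqrt_mul_sqrt {X : Type*} [MeasurableSpace X] {μ : Measure X}
    {f g : X → ℝ} (hf0 : 0 ≤ᵐ[μ] f) (hg0 : 0 ≤ᵐ[μ] g) (hf : MemLp f 2 μ) (hg : MemLp g 2 μ) :
    ∫ x, f x * g x ∂μ ≤ √(∫ x, f x ^ 2 ∂μ) * √(∫ x, g x ^ 2 ∂μ) := by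
  have := integral_mul_le_Lp_mul_Lq_of_nonneg Real.HolderConjugate.two_two hf0 hg0
    (by simpa using hf) (by simpa using hg)
  simpa only [Real.rpow_two, Real.sqrt_eq_rpow] using this

theorem ContinuousOn.memLp_restrict_Icc {E : Type*} [NormedAddCommGroup E] {f : ℝ → E} {a b : ℝ}
    (hf : ContinuousOn f (Icc a b)) (p : ENNReal) : MemLp f p (volume.restrict (Icc a b)) := by
  obtain ⟨C, hC⟩ := isCompact_Icc.exists_bound_of_continuousOn hf
  exact (memLp_top_of_bound (hf.aestronglyMeasurable measurableSet_Icc) C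
    ((ae_restrict_iff' measurableSet_Icc).2 (.of_forall hC))).mono_exponent le_top

theorem norm_sub_sub_smul_deriv_le {E : Type*} [NormedAddCommGroup E] [NormedSpace ℝ E]
    [CompleteSpace E] {u u' u'' : ℝ → E} {a b : ℝ} (hab : a ≤ b)
    (hu : ∀ t ∈ Icc a b, HasDerivAt u (u' t) t) (hu' : ∀ t ∈ Icc a b, HasDerivAt u' (u'' t) t)
    (hc : ContinuousOn u'' (Icc a b)) :
    ‖u b - u a - (b - a) • u' b‖ ≤ √((b - a) ^ 3 / 3) * √(∫ s in a..b, ‖u'' s‖ ^ 2) := by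
  have hI : uIcc a b = Icc a b := uIcc_of_le hab
  rw [sub_sub_smul_deriv_eq_integral (hI ▸ hu) (hI ▸ hu') (hI ▸ hc)]
  have hnonneg : ∀ s ∈ Icc a b, 0 ≤ s - a := fun s hs => sub_nonneg.2 hs.1
  calc ‖∫ s in a..b, (a - s) • u'' s‖ ≤ ∫ s in a..b, ‖(a - s) • u'' s‖ :=
        intervalIntegral.norm_integral_le_integral_norm hab
    _ = ∫ s in Icc a b, (s - a) * ‖u'' s‖ := by
        rw [intervalIntegral.integral_of_le hab, ← integral_Icc_eq_integral_Ioc]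
        refine setIntegral_congr_fun measurableSet_Icc fun s hs => ?_
        rw [norm_smul, Real.norm_of_nonpos (by linarith [hnonneg s hs]), neg_sub]
    _ ≤ √(∫ s in Icc a b, (s - a) ^ 2) * √(∫ s in Icc a b, ‖u'' s‖ ^ 2) :=
        integral_mul_le_sqrt_mul_sqrt
          ((ae_restrict_iff' measurableSet_Icc).2 (.of_forall hnonneg))
          (.of_forall fun _ => norm_nonneg _)
          ((continuousOn_id.sub continuousOn_const).memLp_restrict_Icc 2)
          (hc.norm.memLp_restrict_Icc 2)
    _ = √((b - a) ^ 3 / 3) * √(∫ s in a..b, ‖u'' s‖ ^ 2) := by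
        simp only [integral_Icc_eq_integral_Ioc, ← intervalIntegral.integral_of_le hab,
          intervalIntegral.integral_comp_sub_right (fun s => s ^ 2), sub_self, integral_pow]
        norm_num

theorem norm_sub_le_of_backward_euler {H : Type*} [NormedAddCommGroup H] [NormedSpace ℝ H]
    [CompleteSpace H] {α τ : ℝ} (hα : 0 < α) (hτ : 0 < τ) {m : ℕ} {u u' u'' : ℝ → H}
    {v : ℕ → H} (hu : ∀ t ∈ Icc 0 (m * τ), HasDerivAt u (u' t) t)
    (hu' : ∀ t ∈ Icc 0 (m * τ), HasDerivAt u' (u'' t) t) (hc : ContinuousOn u'' (Icc 0 (m * τ)))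
    (hv0 : v 0 = u 0)
    (hv : ∀ k < m, τ⁻¹ • (v (k + 1) - v k) + α • v (k + 1) =
      u' ((k + 1 : ℕ) * τ) + α • u ((k + 1 : ℕ) * τ)) :
    ‖u (m * τ) - v m‖ ≤ τ / √(3 * α) * √(∫ s in (0 : ℝ)..m * τ, ‖u'' s‖ ^ 2) := by
  have hcell : ∀ k < m, Icc ((k : ℝ) * τ) ((k + 1 : ℕ) * τ) ⊆ Icc 0 (m * τ) := fun k hk =>
    Icc_subset_Icc (by positivity) (by gcongr; omega)
  have hC : √(τ ^ 3 / 3) = τ / √(3 * α) * √(α * τ) := by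
    rw [Real.sqrt_eq_iff_eq_sq (by positivity) (by positivity), mul_pow, div_pow,
      Real.sq_sqrt (by positivity), Real.sq_sqrt (by positivity)]
    field_simp
  have hsum : ∑ k ∈ Finset.range m, ∫ s in (k : ℝ) * τ..(k + 1 : ℕ) * τ, ‖u'' s‖ ^ 2 =
      ∫ s in (0 : ℝ)..m * τ, ‖u'' s‖ ^ 2 := by
    simpa using intervalIntegral.sum_integral_adjacent_intervals (a := fun k : ℕ => (k : ℝ) * τ)
      fun k hk => ((hc.norm.pow 2).mono (hcell k hk)).intervalIntegrable_of_Icc (by gcongr; omega)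
  rw [← hsum]
  refine norm_le_mul_sqrt_sum_of_damped_step (q := α * τ) (e := fun k => u (k * τ) - v k)
    (z := fun k => u ((k + 1 : ℕ) * τ) - u (k * τ) - τ • u' ((k + 1 : ℕ) * τ))
    (by positivity) (by positivity)
    (fun k => intervalIntegral.integral_nonneg (by gcongr; omega) fun _ _ => by positivity)
    (by simp [hv0]) (fun k hk => backward_euler_error_step hτ.ne' (hv k hk)) (fun k hk => ?_)
  have hlen : ((k + 1 : ℕ) : ℝ) * τ - k * τ = τ := by push_cast; ring
  have := norm_sub_sub_smul_deriv_le (by gcongr; omega) (fun t ht => hu t (hcell k hk ht))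
    (fun t ht => hu' t (hcell k hk ht)) (hc.mono (hcell k hk))
  rwa [hlen, hC] at this

theorem stmt_13 {H : Type*} [NormedAddCommGroup H] [InnerProductSpace ℝ H]
    [CompleteSpace H]
    (α T : ℝ) (hα : 0 < α) (hT : 0 < T)
    (M : ℕ) (hM : 1 ≤ M)
    (τ : ℝ) (hτ : τ = T / M)
    (u u' u'' : ℝ → H)
    (hd1 : ∀ t ∈ Set.Icc (0 : ℝ) T, HasDerivAt u (u' t) t)
    (hd2 : ∀ t ∈ Set.Icc (0 : ℝ) T, HasDerivAt u' (u'' t) t)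
    (hc : ContinuousOn u'' (Set.Icc (0 : ℝ) T))
    (f : ℝ → H) (hf : ∀ t, f t = u' t + α • u t)
    (v : ℕ → H) (hv0 : v 0 = u 0)
    (hrec : ∀ m : ℕ, 1 ≤ m → m ≤ M →
      τ⁻¹ • (v m - v (m - 1)) + α • v m = f (m * τ)) :
    ∀ m : ℕ, m ≤ M →
      ‖u (m * τ) - v m‖ ≤
        (τ / Real.sqrt (3 * α)) * Real.sqrt (∫ s in (0 : ℝ)..T, ‖u'' s‖ ^ 2) := by
  intro m hm
  have hτ0 : 0 < τ := by rw [hτ]; exact div_pos hT (by exact_mod_cast hM)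
  have hmT : m * τ ≤ T := by
    calc (m : ℝ) * τ ≤ M * τ := by gcongr
      _ = T := by rw [hτ]; field_simp
  have hsub : Icc 0 (m * τ) ⊆ Icc 0 T := Icc_subset_Icc_right hmT
  refine (norm_sub_le_of_backward_euler hα hτ0 (fun t ht => hd1 t (hsub ht))
    (fun t ht => hd2 t (hsub ht)) (hc.mono hsub) hv0
    (fun k hk => by simpa [hf] using hrec (k + 1) (by omega) (by omega))).trans ?_
  gcongr
  exact intervalIntegral.integral_mono_interval le_rfl (by positivity) hmT
    (.of_forall fun _ => by positivity) ((hc.norm.pow 2).intervalIntegrable_of_Icc hT.le)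
end

section
/- Let V and H be real Hilbert spaces and ι : V → H a continuous linear map. Let β > 0, let a : V × V → ℝ be a bilinear form with a(v, v) ≥ β ‖v‖_V² for all v ∈ V, let M ≥ 1, τ₁, …, τ_M > 0, C₁, …, C_M ≥ 0, and let w⁰, w¹, …, w^M ∈ V satisfy, for each 1 ≤ m ≤ M, ⟨(ι w^m − ι w^{m−1})/τ_m, ι w^m⟩_H + a(w^m, w^m) ≤ C_m ‖w^m‖_V. Then for every m with 1 ≤ m ≤ M, ‖ι w^m‖_H² + β Σ_{j=1}^{m} τ_j ‖w^j‖_V² ≤ ‖ι w⁰‖_H² + (1/β) Σ_{j=1}^{m} τ_j C_j². -/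
/-!
Testing the scheme with `w^m` and using `2⟪x - y, x⟫ ≥ ‖x‖² - ‖y‖²` together with Young's
inequality `2 C ‖w‖ ≤ C² / β + β ‖w‖²` gives the one-step bound
`‖ι w^m‖² + β τ_m ‖w^m‖² ≤ ‖ι w^{m-1}‖² + τ_m C_m² / β`; summing these bounds telescopes.
-/

open scoped RealInnerProductSpace

open Finset

theorem norm_sq_sub_norm_sq_le_two_mul_inner_sub {H : Type*} [NormedAddCommGroup H]
    [InnerProductSpace ℝ H] (x y : H) :
    ‖x‖ ^ 2 - ‖y‖ ^ 2 ≤ 2 * ⟪x - y, x⟫ := by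
  rw [inner_sub_left, real_inner_self_eq_norm_sq, real_inner_comm]
  nlinarith [norm_sub_sq_real x y, norm_nonneg (x - y)]

theorem backwardEuler_step_energy_le {V H : Type*}
    [NormedAddCommGroup V] [InnerProductSpace ℝ V]
    [NormedAddCommGroup H] [InnerProductSpace ℝ H]
    (ι : V →L[ℝ] H) {β : ℝ} (hβ : 0 < β) (a : V →ₗ[ℝ] V →ₗ[ℝ] ℝ)
    (hcoer : ∀ v : V, a v v ≥ β * ‖v‖ ^ 2) {τ : ℝ} (hτ : 0 < τ) (c : ℝ) {u u₀ : V}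
    (h : ⟪τ⁻¹ • (ι u - ι u₀), ι u⟫ + a u u ≤ c * ‖u‖) :
    ‖ι u‖ ^ 2 + β * (τ * ‖u‖ ^ 2) ≤ ‖ι u₀‖ ^ 2 + (1 / β) * (τ * c ^ 2) := by
  rw [real_inner_smul_left] at h
  have hscaled : ⟪ι u - ι u₀, ι u⟫ + τ * a u u ≤ τ * (c * ‖u‖) := by
    have := mul_le_mul_of_nonneg_left h hτ.le
    rwa [mul_add, ← mul_assoc, mul_inv_cancel₀ hτ.ne', one_mul] at this
  have hyoung : 2 * β * (c * ‖u‖) ≤ c ^ 2 + β ^ 2 * ‖u‖ ^ 2 := by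
    nlinarith [sq_nonneg (c - β * ‖u‖)]
  have hinv : β * ((1 / β) * (τ * c ^ 2)) = τ * c ^ 2 := by field_simp
  rw [← mul_le_mul_iff_right₀ hβ]
  nlinarith [norm_sq_sub_norm_sq_le_two_mul_inner_sub (ι u) (ι u₀),
    mul_le_mul_of_nonneg_left hyoung hτ.le, mul_le_mul_of_nonneg_left (hcoer u) hτ.le]

theorem add_sum_Icc_le_of_succ_le {e d f : ℕ → ℝ} {M : ℕ}
    (hstep : ∀ m, 1 ≤ m → m ≤ M → e m + d m ≤ e (m - 1) + f m) :
    ∀ m ≤ M, e m + ∑ j ∈ Icc 1 m, d j ≤ e 0 + ∑ j ∈ Icc 1 m, f j := by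
  intro m
  induction m with
  | zero => simp
  | succ n ih =>
    intro hn
    have hprev := ih (by omega)
    have hlast := hstep (n + 1) (by omega) hn
    rw [Nat.add_sub_cancel] at hlast
    rw [sum_Icc_succ_top (by omega), sum_Icc_succ_top (by omega)]
    linarith

theorem stmt_14_general {V H : Type*}
    [NormedAddCommGroup V] [InnerProductSpace ℝ V]
    [NormedAddCommGroup H] [InnerProductSpace ℝ H]
    (ι : V →L[ℝ] H)
    (β : ℝ) (hβ : 0 < β)
    (a : V →ₗ[ℝ] V →ₗ[ℝ] ℝ)
    (hcoer : ∀ v : V, a v v ≥ β * ‖v‖ ^ 2)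
    (M : ℕ)
    (τ : ℕ → ℝ) (hτ : ∀ m, 1 ≤ m → m ≤ M → 0 < τ m)
    (C : ℕ → ℝ)
    (w : ℕ → V)
    (hineq : ∀ m, 1 ≤ m → m ≤ M →
      ⟪(τ m)⁻¹ • (ι (w m) - ι (w (m - 1))), ι (w m)⟫ + a (w m) (w m) ≤
        C m * ‖w m‖) :
    ∀ m, 1 ≤ m → m ≤ M →
      ‖ι (w m)‖ ^ 2 + β * ∑ j ∈ Finset.Icc 1 m, τ j * ‖w j‖ ^ 2 ≤
        ‖ι (w 0)‖ ^ 2 + (1 / β) * ∑ j ∈ Finset.Icc 1 m, τ j * C j ^ 2 := by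
  intro m _ hm
  rw [mul_sum, mul_sum]
  exact add_sum_Icc_le_of_succ_le (e := fun j => ‖ι (w j)‖ ^ 2)
    (fun j hj hjM =>
      backwardEuler_step_energy_le ι hβ a hcoer (hτ j hj hjM) (C j) (hineq j hj hjM)) m hm

theorem stmt_14 {V H : Type*}
    [NormedAddCommGroup V] [InnerProductSpace ℝ V]
    [NormedAddCommGroup H] [InnerProductSpace ℝ H]
    (ι : V →L[ℝ] H)
    (β : ℝ) (hβ : 0 < β)
    (a : V →ₗ[ℝ] V →ₗ[ℝ] ℝ)
    (hcoer : ∀ v : V, a v v ≥ β * ‖v‖ ^ 2)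
    (M : ℕ) (hM : 1 ≤ M)
    (τ : ℕ → ℝ) (hτ : ∀ m, 1 ≤ m → m ≤ M → 0 < τ m)
    (C : ℕ → ℝ) (hC : ∀ m, 1 ≤ m → m ≤ M → 0 ≤ C m)
    (w : ℕ → V)
    (hineq : ∀ m, 1 ≤ m → m ≤ M →
      ⟪(τ m)⁻¹ • (ι (w m) - ι (w (m - 1))), ι (w m)⟫ + a (w m) (w m) ≤
        C m * ‖w m‖) :
    ∀ m, 1 ≤ m → m ≤ M →
      ‖ι (w m)‖ ^ 2 + β * ∑ j ∈ Finset.Icc 1 m, τ j * ‖w j‖ ^ 2 ≤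
        ‖ι (w 0)‖ ^ 2 + (1 / β) * ∑ j ∈ Finset.Icc 1 m, τ j * C j ^ 2 :=
  stmt_14_general ι β hβ a hcoer M τ hτ C w hineq
end

section
/- Let V and H be real Hilbert spaces and ι : V → H a continuous linear map. Let β > 0, T > 0, let a : V × V → ℝ be a bilinear form with a(v, v) ≥ β ‖v‖_V² for all v ∈ V, let C : [0, T] → ℝ be continuous and nonnegative, and let w : [0, T] → V be such that t ↦ ι w(t) is differentiable in H and for every t ∈ [0, T], ⟨(d/dt)(ι w)(t), ι w(t)⟩_H + a(w(t), w(t)) ≤ C(t) ‖w(t)‖_V, with t ↦ ‖w(t)‖_V continuous. Then for every t ∈ [0, T], ‖ι w(t)‖_H² + β ∫₀ᵗ ‖w(s)‖_V² ds ≤ ‖ι w(0)‖_H² + (1/β) ∫₀ᵗ C(s)² ds. -/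
/-! Differentiating `‖ι w‖²` gives `2 ⟪ι w', ι w⟫`, which by the hypothesis and coercivity is at most
`2 C ‖w‖ - 2 β ‖w‖²`. Young's inequality `2 C ‖w‖ ≤ C² / β + β ‖w‖²` absorbs half of the coercive
term, leaving `C² / β - β ‖w‖²`, and integrating this bound over `[0, t]` is the estimate. -/

open scoped RealInnerProductSpace

open Set intervalIntegral

lemma two_mul_le_div_sub_mul_sq {β c d x : ℝ} (hβ : 0 < β) (h : d + β * x ^ 2 ≤ c * x) :
    2 * d ≤ 1 / β * c ^ 2 - β * x ^ 2 := by
  have hgap : 1 / β * c ^ 2 - β * x ^ 2 - (2 * c * x - 2 * β * x ^ 2) = (β * x - c) ^ 2 / β := by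
    field_simp
    ring
  have : 0 ≤ (β * x - c) ^ 2 / β := by positivity
  linarith

lemma norm_sq_sub_norm_sq_le_integral_of_inner_deriv_le {H : Type*} [NormedAddCommGroup H]
    [InnerProductSpace ℝ H] {f f' : ℝ → H} {φ : ℝ → ℝ} {a b : ℝ} (hab : a ≤ b)
    (hf : ∀ t ∈ Icc a b, HasDerivAt f (f' t) t) (hφ : MeasureTheory.IntegrableOn φ (Icc a b))
    (hle : ∀ t ∈ Icc a b, 2 * ⟪f t, f' t⟫ ≤ φ t) :
    ‖f b‖ ^ 2 - ‖f a‖ ^ 2 ≤ ∫ t in a..b, φ t :=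
  sub_le_integral_of_hasDeriv_right_of_le hab
    (fun t ht => (hf t ht).norm_sq.continuousAt.continuousWithinAt)
    (fun t ht => (hf t (Ioo_subset_Icc_self ht)).norm_sq.hasDerivWithinAt) hφ
    (fun t ht => hle t (Ioo_subset_Icc_self ht))

theorem stmt_15_general {V H : Type*}
    [NormedAddCommGroup V] [InnerProductSpace ℝ V]
    [NormedAddCommGroup H] [InnerProductSpace ℝ H]
    (ι : V →L[ℝ] H)
    (β T : ℝ) (hβ : 0 < β)
    (a : V →ₗ[ℝ] V →ₗ[ℝ] ℝ)
    (hcoer : ∀ v : V, a v v ≥ β * ‖v‖ ^ 2)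
    (C : ℝ → ℝ) (hCcont : ContinuousOn C (Set.Icc 0 T))
    (w : ℝ → V) (dw : ℝ → H)
    (hderiv : ∀ t ∈ Set.Icc (0 : ℝ) T, HasDerivAt (fun s => ι (w s)) (dw t) t)
    (hineq : ∀ t ∈ Set.Icc (0 : ℝ) T,
      ⟪dw t, ι (w t)⟫ + a (w t) (w t) ≤ C t * ‖w t‖)
    (hwcont : ContinuousOn (fun t => ‖w t‖) (Set.Icc 0 T)) :
    ∀ t ∈ Set.Icc (0 : ℝ) T,
      ‖ι (w t)‖ ^ 2 + β * ∫ s in (0 : ℝ)..t, ‖w s‖ ^ 2 ≤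
        ‖ι (w 0)‖ ^ 2 + (1 / β) * ∫ s in (0 : ℝ)..t, C s ^ 2 := by
  intro t ht
  have hsub : Icc 0 t ⊆ Icc 0 T := Icc_subset_Icc_right ht.2
  have hCsq : ContinuousOn (fun s => 1 / β * C s ^ 2) (Icc 0 t) :=
    continuousOn_const.mul ((hCcont.mono hsub).pow 2)
  have hwsq : ContinuousOn (fun s => β * ‖w s‖ ^ 2) (Icc 0 t) :=
    continuousOn_const.mul ((hwcont.mono hsub).pow 2)
  have henergy : ∀ s ∈ Icc 0 t,
      2 * ⟪ι (w s), dw s⟫ ≤ 1 / β * C s ^ 2 - β * ‖w s‖ ^ 2 := fun s hs => by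
    rw [real_inner_comm]
    exact two_mul_le_div_sub_mul_sq hβ
      ((add_le_add_right (hcoer (w s)) _).trans (hineq s (hsub hs)))
  have key := norm_sq_sub_norm_sq_le_integral_of_inner_deriv_le
    (φ := fun s => 1 / β * C s ^ 2 - β * ‖w s‖ ^ 2) ht.1
    (fun s hs => hderiv s (hsub hs)) (hCsq.sub hwsq).integrableOn_Icc henergy
  rw [integral_sub (hCsq.intervalIntegrable_of_Icc ht.1) (hwsq.intervalIntegrable_of_Icc ht.1),
    integral_const_mul, integral_const_mul] at key
  linarith

theorem stmt_15 {V H : Type*}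
    [NormedAddCommGroup V] [InnerProductSpace ℝ V]
    [NormedAddCommGroup H] [InnerProductSpace ℝ H]
    (ι : V →L[ℝ] H)
    (β T : ℝ) (hβ : 0 < β) (hT : 0 < T)
    (a : V →ₗ[ℝ] V →ₗ[ℝ] ℝ)
    (hcoer : ∀ v : V, a v v ≥ β * ‖v‖ ^ 2)
    (C : ℝ → ℝ) (hCcont : ContinuousOn C (Set.Icc 0 T))
    (hCnonneg : ∀ t ∈ Set.Icc (0 : ℝ) T, 0 ≤ C t)
    (w : ℝ → V) (dw : ℝ → H)
    (hderiv : ∀ t ∈ Set.Icc (0 : ℝ) T, HasDerivAt (fun s => ι (w s)) (dw t) t)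
    (hineq : ∀ t ∈ Set.Icc (0 : ℝ) T,
      ⟪dw t, ι (w t)⟫ + a (w t) (w t) ≤ C t * ‖w t‖)
    (hwcont : ContinuousOn (fun t => ‖w t‖) (Set.Icc 0 T)) :
    ∀ t ∈ Set.Icc (0 : ℝ) T,
      ‖ι (w t)‖ ^ 2 + β * ∫ s in (0 : ℝ)..t, ‖w s‖ ^ 2 ≤
        ‖ι (w 0)‖ ^ 2 + (1 / β) * ∫ s in (0 : ℝ)..t, C s ^ 2 :=
  stmt_15_general ι β T hβ a hcoer C hCcont w dw hderiv hineq hwcont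
end
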